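/- Let E ⊂ ℝ^d be open with C² boundary portion Γ and inner unit normal ν (pointing into E), and let u ∈ C¹ up to Γ with u = 0 on Γ and div u = 0 in E. Then on Γ: (i) ∇u = (∂_ν u) ⊗ ν, where ∂_ν u := (∇u)ν; (ii) ∂_ν u · ν = 0; (iii) (∇u)^T ν = 0. Consequently, for any p and any constant vector a, a·(μ(∇u + (∇u)^T) − p I)ν = a·(μ∇u − p I)ν on Γ. -/

import Mathlib

open MeasureTheory Filter Topology

noncomputable section

/-- Vectors in `ℝ^d`. -/
abbrev Rd (d : ℕ) := Fin d → ℝ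

/-- The partial derivative `∂ᵢ f` of a scalar function. -/
def pd {d : ℕ} (i : Fin d) (f : Rd d → ℝ) (x : Rd d) : ℝ :=
  fderiv ℝ f x (Pi.single i 1)

/-- Euclidean dot product. -/
def dotV {d : ℕ} (u v : Rd d) : ℝ := ∑ i, u i * v i

/-- Squared euclidean norm. -/
def normSq {d : ℕ} (w : Rd d) : ℝ := ∑ i, (w i) ^ 2

/-- Squared Frobenius norm of a matrix. -/
def frobSq {d : ℕ} (A : Matrix (Fin d) (Fin d) ℝ) : ℝ := ∑ i, ∑ j, (A i j) ^ 2

/-- Divergence of a vector field. -/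
def divg {d : ℕ} (u : Rd d → Rd d) (x : Rd d) : ℝ := ∑ i, pd i (fun y => u y i) x

/-- `∇u · ∇v` (Frobenius inner product of the Jacobians). -/
def gradDot {d : ℕ} (u v : Rd d → Rd d) (x : Rd d) : ℝ :=
  ∑ i, ∑ j, pd i (fun y => u y j) x * pd i (fun y => v y j) x

/-- The convection integrand `(u · ∇)v · w`. -/
def convTerm {d : ℕ} (u v w : Rd d → Rd d) (x : Rd d) : ℝ :=
  ∑ i, ∑ j, u x i * pd i (fun y => v y j) x * w x j

/-- The trilinear form `b(u,v,w) = ∫_Ω (u·∇)v·w`. -/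
def triB {d : ℕ} (Ω : Set (Rd d)) (u v w : Rd d → Rd d) : ℝ :=
  ∫ x in Ω, convTerm u v w x

/-- Gradient of a scalar function as a vector field. -/
def gradV {d : ℕ} (φ : Rd d → ℝ) (x : Rd d) : Rd d := fun i => pd i φ x

/-- Jacobian matrix `(∇u)_{ij} = ∂ᵢ u_j`. -/
def gradMat {d : ℕ} (u : Rd d → Rd d) (x : Rd d) : Matrix (Fin d) (Fin d) ℝ :=
  fun i j => pd i (fun y => u y j) x

/-- `L²(Ω)` norm of a scalar function. -/
def l2normS {d : ℕ} (Ω : Set (Rd d)) (f : Rd d → ℝ) : ℝ :=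
  Real.sqrt (∫ x in Ω, (f x) ^ 2)

/-- `L²(Ω)` norm of a vector field. -/
def l2normV {d : ℕ} (Ω : Set (Rd d)) (u : Rd d → Rd d) : ℝ :=
  Real.sqrt (∫ x in Ω, normSq (u x))

/-- `L²(Ω)` norm of the gradient of a vector field. -/
def gradL2V {d : ℕ} (Ω : Set (Rd d)) (u : Rd d → Rd d) : ℝ :=
  Real.sqrt (∫ x in Ω, gradDot u u x)

/-- `L²(Ω)` norm of the gradient of a scalar function. -/
def gradL2S {d : ℕ} (Ω : Set (Rd d)) (φ : Rd d → ℝ) : ℝ :=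
  Real.sqrt (∫ x in Ω, normSq (gradV φ x))

/-- `H¹(Ω)` norm of a vector field. -/
def h1normV {d : ℕ} (Ω : Set (Rd d)) (u : Rd d → Rd d) : ℝ :=
  Real.sqrt (∫ x in Ω, (normSq (u x) + gradDot u u x))

/-- `H¹(Ω)` norm of a scalar function. -/
def h1normS {d : ℕ} (Ω : Set (Rd d)) (φ : Rd d → ℝ) : ℝ :=
  Real.sqrt (∫ x in Ω, ((φ x) ^ 2 + normSq (gradV φ x)))

/-- Membership in `H¹(Ω)^d` for vector fields. -/
structure MemH1V {d : ℕ} (Ω : Set (Rd d)) (u : Rd d → Rd d) : Prop where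
  diff : ∀ x ∈ Ω, DifferentiableAt ℝ u x
  l2 : IntegrableOn (fun x => normSq (u x)) Ω
  gradl2 : IntegrableOn (fun x => gradDot u u x) Ω

/-- Membership in `H¹(Ω)` for scalar functions. -/
structure MemH1S {d : ℕ} (Ω : Set (Rd d)) (φ : Rd d → ℝ) : Prop where
  diff : ∀ x ∈ Ω, DifferentiableAt ℝ φ x
  l2 : IntegrableOn (fun x => (φ x) ^ 2) Ω
  gradl2 : IntegrableOn (fun x => normSq (gradV φ x)) Ω

/-- Membership in `H¹₀(Ω)^d` (zero trace, modelled by vanishing outside `Ω`). -/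
def MemH10V {d : ℕ} (Ω : Set (Rd d)) (u : Rd d → Rd d) : Prop :=
  MemH1V Ω u ∧ ∀ x ∉ Ω, u x = 0

/-- Membership in `L²(Ω)` for scalar functions. -/
def MemL2S {d : ℕ} (Ω : Set (Rd d)) (p : Rd d → ℝ) : Prop :=
  AEStronglyMeasurable p (volume.restrict Ω) ∧ IntegrableOn (fun x => (p x) ^ 2) Ω

/-- Essential boundedness (on `Ω`). -/
def BddOn {d : ℕ} (Ω : Set (Rd d)) (φ : Rd d → ℝ) : Prop :=
  ∃ C, ∀ x ∈ Ω, |φ x| ≤ C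

/-- The constant `K_Ω` from Lemma 1. -/
def Kom {d : ℕ} (Ω : Set (Rd d)) : ℝ :=
  if d = 2 then (1 / 2) * (volume Ω).toReal ^ ((1 : ℝ) / 2)
  else (2 * Real.sqrt 2 / 3) * (volume Ω).toReal ^ ((1 : ℝ) / 6)

/-- The surface-tension constant `c₀ = (1/2)∫_{-1}^1 √(2ψ(s)) ds`. -/
def c0 (ψ : ℝ → ℝ) : ℝ := (1 / 2) * ∫ s in (-1 : ℝ)..1, Real.sqrt (2 * ψ s)

/-- Assumption 2 of the paper on the interpolation function `α_ε`. -/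
structure AlphaAssump (αε : ℝ → ℝ) (sa sb : ℝ) : Prop where
  smooth : Differentiable ℝ αε
  lipDeriv : ∃ L, LipschitzWith L (deriv αε)
  nonneg : ∀ s, 0 ≤ αε s
  one : αε 1 = 0
  negone : 0 < αε (-1)
  hsa : sa ≤ -1
  hsb : 1 ≤ sb
  consta : ∀ s ≤ sa, αε s = αε sa
  constb : ∀ s, sb ≤ s → αε s = αε sb

/-- Assumption 1 of the paper on the double-well potential `ψ`. -/
structure PsiAssump (ψ : ℝ → ℝ) : Prop where
  smooth : Differentiable ℝ ψ
  lipDeriv : ∃ L, LipschitzWith L (deriv ψ)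
  nonneg : ∀ s, 0 ≤ ψ s
  zero_iff : ∀ s, ψ s = 0 ↔ s = 1 ∨ s = -1
  growth : ∃ c₁ c₂ t₀ k : ℝ, 0 < c₁ ∧ 0 < c₂ ∧ 0 < t₀ ∧ 2 ≤ k ∧
    ∀ t, t₀ ≤ t → c₁ * t ^ k ≤ ψ t ∧ ψ t ≤ c₂ * t ^ k

/-- Weak solutions of the state equations (porous medium Navier–Stokes),
with boundary data given as the trace of a solenoidal `G ∈ H¹(Ω)^d`. -/
structure StateSol {d : ℕ} (Ω : Set (Rd d)) (μ : ℝ) (αε : ℝ → ℝ)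
    (f G : Rd d → Rd d) (φ : Rd d → ℝ) (u : Rd d → Rd d) (p : Rd d → ℝ) : Prop where
  memu : MemH1V Ω u
  bdry : ∀ x ∈ frontier Ω, u x = G x
  divfree : ∀ x ∈ Ω, divg u x = 0
  memp : MemL2S Ω p
  pmean : (∫ x in Ω, p x) = 0
  weak : ∀ v, MemH10V Ω v →
    (∫ x in Ω, (αε (φ x) * dotV (u x) (v x) + μ * gradDot u v x
      + convTerm u u v x - p x * divg v x))
    = ∫ x in Ω, dotV (f x) (v x)

/-- The admissible design functions `Φ_ad`. -/
def PhiAd {d : ℕ} (Ω : Set (Rd d)) (β : ℝ) (φ : Rd d → ℝ) : Prop :=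
  MemH1S Ω φ ∧ (∫ x in Ω, φ x) = β * (volume Ω).toReal

/-- `H¹` inner product of vector fields. -/
def h1innerV {d : ℕ} (Ω : Set (Rd d)) (u v : Rd d → Rd d) : ℝ :=
  ∫ x in Ω, (dotV (u x) (v x) + gradDot u v x)

/-- `H¹` inner product of scalar functions. -/
def h1innerS {d : ℕ} (Ω : Set (Rd d)) (φ w : Rd d → ℝ) : ℝ :=
  ∫ x in Ω, (φ x * w x + dotV (gradV φ x) (gradV w x))

/-- Weak convergence in `H¹(Ω)^d`. -/
def WeakH1V {d : ℕ} (Ω : Set (Rd d)) (useq : ℕ → Rd d → Rd d) (u : Rd d → Rd d) : Prop :=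
  ∀ w, MemH1V Ω w →
    Tendsto (fun n => h1innerV Ω (useq n) w) atTop (𝓝 (h1innerV Ω u w))

/-- Weak convergence in `H¹(Ω)`. -/
def WeakH1S {d : ℕ} (Ω : Set (Rd d)) (φseq : ℕ → Rd d → ℝ) (φ : Rd d → ℝ) : Prop :=
  ∀ w, MemH1S Ω w →
    Tendsto (fun n => h1innerS Ω (φseq n) w) atTop (𝓝 (h1innerS Ω φ w))

/-- Strong convergence in `H¹(Ω)^d`. -/
def StrongH1V {d : ℕ} (Ω : Set (Rd d)) (useq : ℕ → Rd d → Rd d) (u : Rd d → Rd d) : Prop :=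
  Tendsto (fun n => h1normV Ω (fun x => useq n x - u x)) atTop (𝓝 0)

/-- Strong convergence in `L²(Ω)`. -/
def StrongL2S {d : ℕ} (Ω : Set (Rd d)) (pseq : ℕ → Rd d → ℝ) (p : Rd d → ℝ) : Prop :=
  Tendsto (fun n => l2normS Ω (fun x => pseq n x - p x)) atTop (𝓝 0)

/-- Weak convergence in `L²(Ω)^d`. -/
def WeakL2V {d : ℕ} (Ω : Set (Rd d)) (useq : ℕ → Rd d → Rd d) (u : Rd d → Rd d) : Prop :=
  ∀ v : Rd d → Rd d, AEStronglyMeasurable v (volume.restrict Ω) →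
    IntegrableOn (fun x => normSq (v x)) Ω →
    Tendsto (fun n => ∫ x in Ω, dotV (useq n x) (v x)) atTop
      (𝓝 (∫ x in Ω, dotV (u x) (v x)))

/-- Assumption 3 (Carathéodory and growth conditions) on the surface integrand `h`. -/
structure HAssump {d : ℕ} (Ω : Set (Rd d))
    (h : Rd d → Matrix (Fin d) (Fin d) ℝ → ℝ → Rd d → ℝ) : Prop where
  meas : ∀ (A : Matrix (Fin d) (Fin d) ℝ) (s : ℝ) (w : Rd d),
    AEStronglyMeasurable (fun x => h x A s w) (volume.restrict Ω)
  cont : ∀ᵐ x ∂(volume.restrict Ω),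
    Continuous fun q : Matrix (Fin d) (Fin d) ℝ × ℝ × Rd d => h x q.1 q.2.1 q.2.2
  growth : ∃ a b₁ b₂ b₃ : Rd d → ℝ,
    (∀ x, 0 ≤ a x) ∧ (∀ x, 0 ≤ b₁ x) ∧ (∀ x, 0 ≤ b₂ x) ∧ (∀ x, 0 ≤ b₃ x) ∧
    IntegrableOn a Ω ∧ (∃ C, ∀ x, b₁ x ≤ C ∧ b₂ x ≤ C ∧ b₃ x ≤ C) ∧
    ∀ x A s w, |h x A s w| ≤ a x + b₁ x * frobSq A + b₂ x * s ^ 2 + b₃ x * normSq w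

/-- Assumption 4 (differentiability with linear growth of the partial derivatives
`D₂h, D₃h, D₄h`) on the surface integrand `h`. -/
structure HDerivAssump {d : ℕ} (Ω : Set (Rd d))
    (h : Rd d → Matrix (Fin d) (Fin d) ℝ → ℝ → Rd d → ℝ)
    (D2 : Rd d → Matrix (Fin d) (Fin d) ℝ → ℝ → Rd d → Matrix (Fin d) (Fin d) ℝ)
    (D3 : Rd d → Matrix (Fin d) (Fin d) ℝ → ℝ → Rd d → ℝ)
    (D4 : Rd d → Matrix (Fin d) (Fin d) ℝ → ℝ → Rd d → Rd d) : Prop where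
  w11 : ∀ A s w, IntegrableOn (fun x => h x A s w) Ω
  d2 : ∀ x A s w B, HasDerivAt (fun t : ℝ => h x (A + t • B) s w)
        (∑ i, ∑ j, D2 x A s w i j * B i j) 0
  d3 : ∀ x A s w, HasDerivAt (fun t : ℝ => h x A (s + t) w) (D3 x A s w) 0
  d4 : ∀ x A s w z, HasDerivAt (fun t : ℝ => h x A s (w + t • z)) (dotV (D4 x A s w) z) 0
  growth : ∃ ta tb₁ tb₂ tb₃ : Rd d → ℝ,
    (∀ x, 0 ≤ ta x) ∧ (∀ x, 0 ≤ tb₁ x) ∧ (∀ x, 0 ≤ tb₂ x) ∧ (∀ x, 0 ≤ tb₃ x) ∧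
    IntegrableOn ta Ω ∧ (∃ C, ∀ x, tb₁ x ≤ C ∧ tb₂ x ≤ C ∧ tb₃ x ≤ C) ∧
    ∀ x A s w,
      Real.sqrt (frobSq (D2 x A s w))
          ≤ ta x + tb₁ x * Real.sqrt (frobSq A) + tb₂ x * |s| + tb₃ x * Real.sqrt (normSq w) ∧
      |D3 x A s w|
          ≤ ta x + tb₁ x * Real.sqrt (frobSq A) + tb₂ x * |s| + tb₃ x * Real.sqrt (normSq w) ∧
      Real.sqrt (normSq (D4 x A s w))
          ≤ ta x + tb₁ x * Real.sqrt (frobSq A) + tb₂ x * |s| + tb₃ x * Real.sqrt (normSq w)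

/-- The surface part `H(u,p,φ) = ∫_Ω M(φ) h(x,∇u,p,∇φ)` of the objective. -/
def Hfun {d : ℕ} (Ω : Set (Rd d)) (M : ℝ → ℝ)
    (h : Rd d → Matrix (Fin d) (Fin d) ℝ → ℝ → Rd d → ℝ)
    (u : Rd d → Rd d) (p : Rd d → ℝ) (φ : Rd d → ℝ) : ℝ :=
  ∫ x in Ω, M (φ x) * h x (gradMat u x) (p x) (gradV φ x)

/-- The phase field objective functional `J_ε^h`. -/
def Jgen {d : ℕ} (Ω : Set (Rd d)) (γ ε : ℝ) (αε ψ M : ℝ → ℝ)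
    (h : Rd d → Matrix (Fin d) (Fin d) ℝ → ℝ → Rd d → ℝ)
    (φ : Rd d → ℝ) (u : Rd d → Rd d) (p : Rd d → ℝ) : ℝ :=
  (∫ x in Ω, ((1 / 2) * αε (φ x) * normSq (u x)
      + γ / (2 * c0 ψ) * ((ε / 2) * normSq (gradV φ x) + ψ (φ x) / ε)))
  + Hfun Ω M h u p φ

/-- The hydrodynamic force integrand `h(x,A,s,w) = w · (μ(A + Aᵀ) - s I) a`. -/
def hydroh {d : ℕ} (μ : ℝ) (a : Rd d) :
    Rd d → Matrix (Fin d) (Fin d) ℝ → ℝ → Rd d → ℝ :=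
  fun _ A s w => ∑ i, ∑ j, w i * ((μ * (A i j + A j i) - (if i = j then s else 0)) * a j)

/-- Weak solutions of the linearized state system (3.4). -/
structure LinSol {d : ℕ} (Ω : Set (Rd d)) (μ : ℝ) (αε : ℝ → ℝ)
    (φε : Rd d → ℝ) (uε : Rd d → Rd d)
    (φ : Rd d → ℝ) (u : Rd d → Rd d) (p : Rd d → ℝ) : Prop where
  memu : MemH10V Ω u
  divfree : ∀ x ∈ Ω, divg u x = 0
  memp : MemL2S Ω p
  pmean : (∫ x in Ω, p x) = 0
  weak : ∀ v, MemH10V Ω v →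
    (∫ x in Ω, (deriv αε (φε x) * φ x * dotV (uε x) (v x)
      + αε (φε x) * dotV (u x) (v x) + μ * gradDot u v x
      + convTerm u uε v x + convTerm uε u v x - p x * divg v x)) = 0

/-- Sum of the `H¹`-norm and the sup-norm on `Ω` (the `H¹(Ω) ∩ L^∞(Ω)` norm). -/
def nrmH1Linf {d : ℕ} (Ω : Set (Rd d)) (φ : Rd d → ℝ) : ℝ :=
  h1normS Ω φ + ⨆ x ∈ Ω, |φ x|

/-- The bilinear form (3.9) used for the adjoint system. -/
def adjBil {d : ℕ} (Ω : Set (Rd d)) (μ : ℝ) (αε : ℝ → ℝ)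
    (φε : Rd d → ℝ) (uε : Rd d → Rd d) (u v : Rd d → Rd d) : ℝ :=
  ∫ x in Ω, (αε (φε x) * dotV (u x) (v x) + μ * gradDot u v x
    + convTerm u uε v x - convTerm uε u v x)

/-- Weak solutions of the adjoint system (3.6). -/
structure AdjSol {d : ℕ} (Ω : Set (Rd d)) (μ : ℝ) (αε M : ℝ → ℝ)
    (D2 : Rd d → Matrix (Fin d) (Fin d) ℝ → ℝ → Rd d → Matrix (Fin d) (Fin d) ℝ)
    (D3 : Rd d → Matrix (Fin d) (Fin d) ℝ → ℝ → Rd d → ℝ)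
    (φε : Rd d → ℝ) (uε : Rd d → Rd d) (pε : Rd d → ℝ)
    (q : Rd d → Rd d) (π : Rd d → ℝ) : Prop where
  memq : MemH10V Ω q
  memπ : MemL2S Ω π
  πmean : (∫ x in Ω, π x) = 0
  divq : ∀ x ∈ Ω, divg q x =
    - M (φε x) * D3 x (gradMat uε x) (pε x) (gradV φε x)
    + (volume Ω).toReal⁻¹ *
        ∫ y in Ω, M (φε y) * D3 y (gradMat uε y) (pε y) (gradV φε y)
  weak : ∀ v, MemH10V Ω v →
    (∫ x in Ω, (αε (φε x) * dotV (q x - uε x) (v x)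
      + μ * (∑ i, ∑ j, (gradMat q x i j + gradMat q x j i) * gradMat v x i j)
      + convTerm v uε q x - convTerm uε q v x - π x * divg v x))
    = ∫ x in Ω, M (φε x) *
        (∑ i, ∑ j, D2 x (gradMat uε x) (pε x) (gradV φε x) i j * gradMat v x i j)
/-!
On `Γ` the velocity vanishes, so `∇u` annihilates every tangent vector (differentiate `u` along
a curve in `Γ`); hence `∂_j u_k = ν_j (∂_ν u)_k`, a rank-one matrix. Its trace `ν · ∂_ν u` is
`div u`, which vanishes on `Γ` by continuity of `∇u` up to the boundary. All four identities are
linear algebra on this rank-one matrix.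
-/

theorem fderiv_apply_eq_zero_of_curve {E F : Type*} [NormedAddCommGroup E] [NormedSpace ℝ E]
    [NormedAddCommGroup F] [NormedSpace ℝ F] {u : E → F} {Γ : Set E} {x t : E} {c : ℝ → E}
    (hu : DifferentiableAt ℝ u x) (hu0 : ∀ y ∈ Γ, u y = 0)
    (hc0 : c 0 = x) (hc : HasDerivAt c t 0) (hcΓ : ∀ᶠ s in 𝓝 0, c s ∈ Γ) :
    fderiv ℝ u x t = 0 := by
  subst hc0
  have hcomp : HasDerivAt (u ∘ c) (fderiv ℝ u (c 0) t) 0 :=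
    hu.hasFDerivAt.comp_hasDerivAt 0 hc
  have hconst : u ∘ c =ᶠ[𝓝 0] fun _ => 0 := hcΓ.mono fun s hs => hu0 _ hs
  exact hcomp.unique ((hasDerivAt_const 0 (0 : F)).congr_of_eventuallyEq hconst)

theorem LinearMap.apply_eq_dotV_smul_of_orthogonal {d : ℕ} {M : Type*} [AddCommGroup M]
    [Module ℝ M] (L : Rd d →ₗ[ℝ] M) {ν : Rd d} (hν : normSq ν = 1)
    (hL : ∀ t, dotV t ν = 0 → L t = 0) (v : Rd d) :
    L v = dotV v ν • L ν := by
  have hνν : ν ⬝ᵥ ν = 1 := by rw [← hν]; simp only [dotProduct, normSq, sq]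
  have horth : dotV (v - dotV v ν • ν) ν = 0 := by
    change (v - (v ⬝ᵥ ν) • ν) ⬝ᵥ ν = 0
    rw [sub_dotProduct, smul_dotProduct, hνν, smul_eq_mul, mul_one, sub_self]
  calc L v = L (v - dotV v ν • ν) + L (dotV v ν • ν) := by rw [← map_add, sub_add_cancel]
    _ = dotV v ν • L ν := by rw [hL _ horth, map_smul, zero_add]

section Jacobian

variable {d : ℕ} {u : Rd d → Rd d} {x : Rd d}

theorem pd_eq_fderiv_apply (hu : DifferentiableAt ℝ u x) (j k : Fin d) :
    pd j (fun y => u y k) x = fderiv ℝ u x (Pi.single j 1) k := by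
  rw [pd, fderiv_apply hu k]
  rfl

theorem divg_eq_sum_fderiv_apply (hu : DifferentiableAt ℝ u x) :
    divg u x = ∑ j, fderiv ℝ u x (Pi.single j 1) j :=
  Finset.sum_congr rfl fun j _ => pd_eq_fderiv_apply hu j j

theorem divg_eq_zero_of_mem_closure {E : Set (Rd d)} (hx : x ∈ closure E)
    (hux : DifferentiableAt ℝ u x) (hC1 : ContinuousAt (fderiv ℝ u) x)
    (hdiff : ∀ y ∈ E, DifferentiableAt ℝ u y) (hdiv : ∀ y ∈ E, divg u y = 0) :
    divg u x = 0 := by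
  have htrace : Continuous fun L : Rd d →L[ℝ] Rd d => ∑ j, L (Pi.single j 1) j := by fun_prop
  have hmaps : Set.MapsTo (fun y => ∑ j, fderiv ℝ u y (Pi.single j 1) j) E {0} :=
    fun y hy => (divg_eq_sum_fderiv_apply (hdiff y hy)).symm.trans (hdiv y hy)
  have := (htrace.continuousAt.comp hC1).continuousWithinAt.mem_closure hx hmaps
  rw [closure_singleton] at this
  exact (divg_eq_sum_fderiv_apply hux).trans this

theorem pd_eq_mul_fderiv_normal {Γ : Set (Rd d)} {ν : Rd d} (hν : normSq ν = 1)
    (hux : DifferentiableAt ℝ u x) (hu0 : ∀ y ∈ Γ, u y = 0)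
    (hcurve : ∀ t, dotV t ν = 0 →
      ∃ c : ℝ → Rd d, c 0 = x ∧ HasDerivAt c t 0 ∧ ∀ᶠ s in 𝓝 (0 : ℝ), c s ∈ Γ)
    (j k : Fin d) :
    pd j (fun y => u y k) x = ν j * fderiv ℝ u x ν k := by
  have htangent : ∀ t, dotV t ν = 0 → fderiv ℝ u x t = 0 := fun t ht => by
    obtain ⟨c, hc0, hc, hcΓ⟩ := hcurve t ht
    exact fderiv_apply_eq_zero_of_curve hux hu0 hc0 hc hcΓ
  have hsingle : dotV (Pi.single j 1) ν = ν j := by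
    simp [dotV, Pi.single_apply, ite_mul]
  have hdecomp := (fderiv ℝ u x).toLinearMap.apply_eq_dotV_smul_of_orthogonal hν htangent
    (Pi.single j 1)
  rw [ContinuousLinearMap.coe_coe, hsingle] at hdecomp
  rw [pd_eq_fderiv_apply hux, hdecomp]
  rfl

end Jacobian

section RankOne

variable {d : ℕ} {g : Fin d → Fin d → ℝ} {ν w : Rd d}

theorem rankOne_dotV_eq_sum_diag (hg : ∀ j k, g j k = ν j * w k) : dotV ν w = ∑ j, g j j :=
  Finset.sum_congr rfl fun j _ => (hg j j).symm

theorem rankOne_sum_mul_left_eq (hg : ∀ j k, g j k = ν j * w k) (hν : normSq ν = 1)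
    (k : Fin d) : ∑ m, ν m * g m k = w k := by
  simp only [hg, ← mul_assoc, ← Finset.sum_mul, ← sq]
  rw [← normSq, hν, one_mul]

theorem rankOne_eq_sum_mul_left_mul (hg : ∀ j k, g j k = ν j * w k) (hν : normSq ν = 1)
    (j k : Fin d) : g j k = (∑ m, ν m * g m k) * ν j := by
  rw [rankOne_sum_mul_left_eq hg hν, hg, mul_comm]

theorem rankOne_sum_sum_mul_left_mul_eq_zero (hg : ∀ j k, g j k = ν j * w k)
    (hν : normSq ν = 1) (hw : dotV ν w = 0) : ∑ k, (∑ m, ν m * g m k) * ν k = 0 := by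
  simp only [rankOne_sum_mul_left_eq hg hν, mul_comm (w _)]
  exact hw

theorem rankOne_sum_mul_right_eq_zero (hg : ∀ j k, g j k = ν j * w k) (hw : dotV ν w = 0)
    (i : Fin d) : ∑ j, g i j * ν j = 0 := by
  simp only [hg, mul_assoc, ← Finset.mul_sum, mul_comm (w _)]
  rw [← dotV, hw, mul_zero]

end RankOne

theorem traction_symm_eq_traction {d : ℕ} {g : Fin d → Fin d → ℝ} {ν : Rd d}
    (hg : ∀ i, ∑ j, g i j * ν j = 0) (μ p : ℝ) (a : Rd d) :
    ∑ i, ∑ j, a i * ((μ * (g j i + g i j) - (if i = j then p else 0)) * ν j)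
      = ∑ i, ∑ j, a i * ((μ * g j i - (if i = j then p else 0)) * ν j) := by
  refine Finset.sum_congr rfl fun i _ => ?_
  have hsplit : ∑ j, a i * ((μ * (g j i + g i j) - (if i = j then p else 0)) * ν j)
      = ∑ j, a i * ((μ * g j i - (if i = j then p else 0)) * ν j)
        + a i * μ * ∑ j, g i j * ν j := by
    rw [Finset.mul_sum, ← Finset.sum_add_distrib]
    exact Finset.sum_congr rfl fun j _ => by ring
  rw [hsplit, hg i, mul_zero, add_zero]

theorem stmt_17_general {d : ℕ}
    (E : Set (Rd d)) (Γ : Set (Rd d))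
    (hΓcl : Γ ⊆ closure E)
    (ν : Rd d → Rd d) (hν : ∀ x ∈ Γ, normSq (ν x) = 1)
    -- `Γ` is a `C²` hypersurface with normal `ν`: every tangent vector is the
    -- velocity of a differentiable curve inside `Γ`
    (hΓman : ∀ x ∈ Γ, ∀ t : Rd d, dotV t (ν x) = 0 →
      ∃ c : ℝ → Rd d, c 0 = x ∧ HasDerivAt c t 0 ∧ ∀ᶠ s in 𝓝 (0 : ℝ), c s ∈ Γ)
    (u : Rd d → Rd d)
    -- `u` is `C¹` up to `Γ`
    (hudiff : ∀ x ∈ Γ ∪ E, DifferentiableAt ℝ u x)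
    (huC1 : ∀ x ∈ Γ, ContinuousAt (fun y => fderiv ℝ u y) x)
    (hu0 : ∀ x ∈ Γ, u x = 0)
    (hdiv : ∀ x ∈ E, divg u x = 0)
    (μ : ℝ) :
    -- (i) `∇u = ∂_ν u ⊗ ν` on `Γ` (componentwise: `∂_j u_k = (∂_ν u_k) ν_j`)
    (∀ x ∈ Γ, ∀ j k : Fin d,
      pd j (fun y => u y k) x
        = (∑ m, ν x m * pd m (fun y => u y k) x) * ν x j) ∧
    -- (ii) `∂_ν u · ν = 0` on `Γ`
    (∀ x ∈ Γ, ∑ k, (∑ m, ν x m * pd m (fun y => u y k) x) * ν x k = 0) ∧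
    -- (iii) `(∇u)ᵀ ν = 0` on `Γ`
    (∀ x ∈ Γ, ∀ i : Fin d, ∑ j, pd i (fun y => u y j) x * ν x j = 0) ∧
    -- consequence: `a·(μ(∇u+(∇u)ᵀ) - p I)ν = a·(μ∇u - p I)ν` on `Γ`
    (∀ x ∈ Γ, ∀ (p : ℝ) (a : Rd d),
      (∑ i, ∑ j, a i * ((μ * (pd j (fun y => u y i) x + pd i (fun y => u y j) x)
          - (if i = j then p else 0)) * ν x j))
      = ∑ i, ∑ j, a i * ((μ * pd j (fun y => u y i) x
          - (if i = j then p else 0)) * ν x j)) := by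
  have hrank : ∀ x ∈ Γ, ∀ j k, pd j (fun y => u y k) x = ν x j * fderiv ℝ u x (ν x) k :=
    fun x hx => pd_eq_mul_fderiv_normal (hν x hx) (hudiff x (.inl hx)) hu0 (hΓman x hx)
  have hnormal : ∀ x ∈ Γ, dotV (ν x) (fderiv ℝ u x (ν x)) = 0 := fun x hx => by
    rw [rankOne_dotV_eq_sum_diag (hrank x hx)]
    exact divg_eq_zero_of_mem_closure (hΓcl hx) (hudiff x (.inl hx)) (huC1 x hx)
      (fun y hy => hudiff y (.inr hy)) hdiv
  have htransp : ∀ x ∈ Γ, ∀ i, ∑ j, pd i (fun y => u y j) x * ν x j = 0 :=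
    fun x hx => rankOne_sum_mul_right_eq_zero (hrank x hx) (hnormal x hx)
  exact ⟨fun x hx => rankOne_eq_sum_mul_left_mul (hrank x hx) (hν x hx),
    fun x hx => rankOne_sum_sum_mul_left_mul_eq_zero (hrank x hx) (hν x hx) (hnormal x hx),
    htransp, fun x hx => traction_symm_eq_traction (htransp x hx) μ⟩

/-- displays (2.8)–(2.10): for a no-slip, divergence-free
velocity field `u` on a `C²` boundary portion `Γ` with unit normal `ν`:
(i) `∇u = ∂_ν u ⊗ ν`, (ii) `∂_ν u · ν = 0`, (iii) `(∇u)ᵀ ν = 0`, and hence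
`a·(μ(∇u + (∇u)ᵀ) - p I)ν = a·(μ∇u - p I)ν` on `Γ`. -/
theorem stmt_17 {d : ℕ} (hd : d = 2 ∨ d = 3)
    (E : Set (Rd d)) (hE : IsOpen E) (Γ : Set (Rd d))
    (hΓfr : Γ ⊆ frontier E) (hΓcl : Γ ⊆ closure E)
    (ν : Rd d → Rd d) (hν : ∀ x ∈ Γ, normSq (ν x) = 1)
    -- `Γ` is a `C²` hypersurface with normal `ν`: every tangent vector is the
    -- velocity of a differentiable curve inside `Γ`
    (hΓman : ∀ x ∈ Γ, ∀ t : Rd d, dotV t (ν x) = 0 →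
      ∃ c : ℝ → Rd d, c 0 = x ∧ HasDerivAt c t 0 ∧ ∀ᶠ s in 𝓝 (0 : ℝ), c s ∈ Γ)
    (u : Rd d → Rd d)
    -- `u` is `C¹` up to `Γ`
    (hudiff : ∀ x ∈ Γ ∪ E, DifferentiableAt ℝ u x)
    (huC1 : ∀ x ∈ Γ, ContinuousAt (fun y => fderiv ℝ u y) x)
    (hu0 : ∀ x ∈ Γ, u x = 0)
    (hdiv : ∀ x ∈ E, divg u x = 0)
    (μ : ℝ) (hμ : 0 < μ) :
    -- (i) `∇u = ∂_ν u ⊗ ν` on `Γ` (componentwise: `∂_j u_k = (∂_ν u_k) ν_j`)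
    (∀ x ∈ Γ, ∀ j k : Fin d,
      pd j (fun y => u y k) x
        = (∑ m, ν x m * pd m (fun y => u y k) x) * ν x j) ∧
    -- (ii) `∂_ν u · ν = 0` on `Γ`
    (∀ x ∈ Γ, ∑ k, (∑ m, ν x m * pd m (fun y => u y k) x) * ν x k = 0) ∧
    -- (iii) `(∇u)ᵀ ν = 0` on `Γ`
    (∀ x ∈ Γ, ∀ i : Fin d, ∑ j, pd i (fun y => u y j) x * ν x j = 0) ∧
    -- consequence: `a·(μ(∇u+(∇u)ᵀ) - p I)ν = a·(μ∇u - p I)ν` on `Γ`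
    (∀ x ∈ Γ, ∀ (p : ℝ) (a : Rd d),
      (∑ i, ∑ j, a i * ((μ * (pd j (fun y => u y i) x + pd i (fun y => u y j) x)
          - (if i = j then p else 0)) * ν x j))
      = ∑ i, ∑ j, a i * ((μ * pd j (fun y => u y i) x
          - (if i = j then p else 0)) * ν x j)) :=
  stmt_17_general E Γ hΓcl ν hν hΓman u hudiff huC1 hu0 hdiv μ
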